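/- arXiv:0910.4209 — 2 statements merged into one kernel-verified Lean document; each statement's English description precedes it below -/
import Mathlib

section
/- Let r, r′, a, a′, δ, r₁ be positive integers with r′ ≤ r, a·r′ + a′·r = r·r′ + δ, and r dividing a·r₁ − 1. Then r₁·δ ≡ r′ (mod r) and r₁·δ ≥ r′. Consequently, as rational numbers, −δ/(r·r′) + 1/(r·r₁) ≤ 0. -/
/-- Key numerical inequality for extremal neighborhoods of semistable type IA+IA:
if `r' ≤ r`, `a r' + a' r = r r' + δ` and `r ∣ a r₁ - 1`, then
`r₁ δ ≡ r' (mod r)`, `r₁ δ ≥ r'`, and `-δ/(r r') + 1/(r r₁) ≤ 0`. -/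
theorem stmt_1 (r r' a a' δ r₁ : ℤ)
    (hr : 0 < r) (hr' : 0 < r') (ha : 0 < a) (ha' : 0 < a') (hδ : 0 < δ) (hr₁ : 0 < r₁)
    (hle : r' ≤ r) (heq : a * r' + a' * r = r * r' + δ) (hdvd : r ∣ a * r₁ - 1) :
    r₁ * δ ≡ r' [ZMOD r] ∧ r' ≤ r₁ * δ ∧
      -(δ : ℚ) / ((r : ℚ) * (r' : ℚ)) + 1 / ((r : ℚ) * (r₁ : ℚ)) ≤ 0 := by
  obtain ⟨k, hk⟩ := hdvd
  have h1 : r ∣ r₁ * δ - r' := by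
    refine ⟨r' * k + r₁ * a' - r₁ * r', ?_⟩
    have : a * r₁ = r * k + 1 := by linarith
    nlinarith [heq, this]
  have hmod : r₁ * δ ≡ r' [ZMOD r] :=
    (Int.modEq_iff_dvd.mpr h1).symm
  have hge : r' ≤ r₁ * δ := by
    by_contra h
    push_neg at h
    have h2 : 0 < r₁ * δ := mul_pos hr₁ hδ
    obtain ⟨m, hm⟩ := h1
    rcases lt_trichotomy m 0 with hm0 | hm0 | hm0
    · nlinarith [mul_le_mul_of_nonneg_left (show m ≤ -1 by omega) hr.le]
    · subst hm0; simp at hm; omega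
    · nlinarith [mul_le_mul_of_nonneg_left (show (1:ℤ) ≤ m by omega) hr.le]
  refine ⟨hmod, hge, ?_⟩
  have hrQ : (0:ℚ) < (r:ℚ) := by exact_mod_cast hr
  have hr'Q : (0:ℚ) < (r':ℚ) := by exact_mod_cast hr'
  have hr₁Q : (0:ℚ) < (r₁:ℚ) := by exact_mod_cast hr₁
  have hgeQ : (r':ℚ) ≤ (r₁:ℚ) * (δ:ℚ) := by exact_mod_cast hge
  rw [neg_div, add_comm, ← sub_eq_add_neg, sub_nonpos,
    div_le_div_iff₀ (by positivity) (by positivity)]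
  nlinarith
end

section
/- Let S be a finite nonempty set of pairs of natural numbers containing at least one pair whose first coordinate is 0, with λ and ν_s defined as usual, and assume ν_1 < λ. Let S′ = { (i, i + j − ν_1) : (i,j) ∈ S } (this is a set of pairs of natural numbers, since i + j ≥ ν_1 for all (i,j) ∈ S). Then S′ contains a pair whose first coordinate is 0, λ(S′) = λ(S) − ν_1, ν_s(S′) = ν_{s+1}(S) − ν_1 for every natural number s, and min{ s ≥ 1 : ν_s(S′) = λ(S′) } = min{ s ≥ 1 : ν_s(S) = λ(S) } − 1. -/
lemma sInf_sub_aux (A : Set ℕ) (hA : A.Nonempty) (c : ℕ) (hc : ∀ a ∈ A, c ≤ a) :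
    sInf ((· - c) '' A) = sInf A - c := by
  apply le_antisymm
  · exact Nat.sInf_le ⟨sInf A, Nat.sInf_mem hA, rfl⟩
  · apply le_csInf (hA.image _)
    rintro n ⟨a, ha, rfl⟩
    exact Nat.sub_le_sub_right (Nat.sInf_le ha) c

/-- The recursion step for the depth formula `dep = λ r - t` of a `cA/r` point:
if `ν 1 < λ` and `S' = { (i, i + j - ν 1) | (i,j) ∈ S }`, then `S'` contains a
pair with first coordinate `0`, `λ(S') = λ(S) - ν 1`, `ν_s(S') = ν_{s+1}(S) - ν 1`
for every `s`, and `t(S') = t(S) - 1`. -/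
theorem stmt_6 (S : Finset (ℕ × ℕ)) (hS : S.Nonempty) (h0 : ∃ j, (0, j) ∈ S)
    (lam : ℕ) (hlam : lam = sInf {j | (0, j) ∈ S})
    (ν : ℕ → ℕ) (hν : ∀ s, ν s = sInf {n | ∃ i j, (i, j) ∈ S ∧ n = s * i + j})
    (hlt : ν 1 < lam)
    (S' : Finset (ℕ × ℕ)) (hS' : S' = S.image fun p => (p.1, p.1 + p.2 - ν 1))
    (lam' : ℕ) (hlam' : lam' = sInf {j | (0, j) ∈ S'})
    (ν' : ℕ → ℕ) (hν' : ∀ s, ν' s = sInf {n | ∃ i j, (i, j) ∈ S' ∧ n = s * i + j}) :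
    (∃ j, (0, j) ∈ S') ∧ lam' = lam - ν 1 ∧ (∀ s, ν' s = ν (s + 1) - ν 1) ∧
      sInf {s | 1 ≤ s ∧ ν' s = lam'} = sInf {s | 1 ≤ s ∧ ν s = lam} - 1 := by
  obtain ⟨j0, hj0⟩ := h0
  set c := ν 1 with hc
  -- c ≤ i + j for all (i,j) ∈ S
  have key : ∀ p ∈ S, c ≤ p.1 + p.2 := by
    intro p hp
    have : c ≤ 1 * p.1 + p.2 := by
      rw [hc, hν 1]
      exact Nat.sInf_le ⟨p.1, p.2, hp, rfl⟩
    simpa using this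
  -- claim 1
  have claim1 : ∃ j, (0, j) ∈ S' := by
    refine ⟨0 + j0 - c, ?_⟩
    rw [hS']
    exact Finset.mem_image.mpr ⟨(0, j0), hj0, rfl⟩
  -- claim 2
  have hAset : {j | (0, j) ∈ S'} = (· - c) '' {j | (0, j) ∈ S} := by
    ext j
    constructor
    · intro hj
      rw [hS'] at hj
      obtain ⟨⟨a, b⟩, hab, heq⟩ := Finset.mem_image.mp hj
      simp only [Prod.mk.injEq] at heq
      obtain ⟨ha, hb⟩ := heq
      refine ⟨b, ?_, ?_⟩
      · simpa [← ha] using hab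
      · show b - c = j
        omega
    · rintro ⟨b, hb, rfl⟩
      rw [hS']
      exact Finset.mem_image.mpr ⟨(0, b), hb, by simp⟩
  have claim2 : lam' = lam - c := by
    rw [hlam', hlam, hAset, sInf_sub_aux _ ⟨j0, hj0⟩]
    intro a ha
    simpa using key (0, a) ha
  -- claim 3
  have claim3 : ∀ s, ν' s = ν (s + 1) - c := by
    intro s
    have hset : {n | ∃ i j, (i, j) ∈ S' ∧ n = s * i + j}
        = (· - c) '' {n | ∃ i j, (i, j) ∈ S ∧ n = (s + 1) * i + j} := by
      ext n
      constructor
      · rintro ⟨i, j, hij, rfl⟩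
        rw [hS'] at hij
        obtain ⟨⟨a, b⟩, hab, heq⟩ := Finset.mem_image.mp hij
        simp only [Prod.mk.injEq] at heq
        obtain ⟨ha, hb⟩ := heq
        subst ha hb
        refine ⟨(s + 1) * a + b, ⟨a, b, hab, rfl⟩, ?_⟩
        have := key (a, b) hab
        show (s + 1) * a + b - c = s * a + (a + b - c)
        rw [add_mul, one_mul]
        omega
      · rintro ⟨m, ⟨a, b, hab, rfl⟩, rfl⟩
        refine ⟨a, a + b - c, ?_, ?_⟩
        · rw [hS']; exact Finset.mem_image.mpr ⟨(a, b), hab, rfl⟩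
        · have := key (a, b) hab
          simp only [add_mul, one_mul]
          omega
    have hne : {n | ∃ i j, (i, j) ∈ S ∧ n = (s + 1) * i + j}.Nonempty := by
      obtain ⟨p, hp⟩ := hS
      exact ⟨(s + 1) * p.1 + p.2, p.1, p.2, hp, rfl⟩
    rw [hν' s, hν (s + 1), hset, sInf_sub_aux _ hne]
    rintro m ⟨a, b, hab, rfl⟩
    have := key (a, b) hab
    simp only [add_mul, one_mul]
    omega
  -- c ≤ ν (s+1)
  have hνge : ∀ s, c ≤ ν (s + 1) := by
    intro s
    have hne : {n | ∃ i j, (i, j) ∈ S ∧ n = (s + 1) * i + j}.Nonempty := by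
      obtain ⟨p, hp⟩ := hS
      exact ⟨(s + 1) * p.1 + p.2, p.1, p.2, hp, rfl⟩
    have hmem := Nat.sInf_mem hne
    obtain ⟨a, b, hab, heq⟩ := hmem
    have := key (a, b) hab
    rw [hν (s + 1), heq]
    simp only [add_mul, one_mul]
    omega
  -- claim 4
  have hsetT : {s | 1 ≤ s ∧ ν' s = lam'} = {s | 1 ≤ s ∧ ν (s + 1) = lam} := by
    ext s
    simp only [Set.mem_setOf_eq, claim2, claim3 s]
    have h1 := hνge s
    constructor
    · rintro ⟨h, h2⟩; exact ⟨h, by omega⟩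
    · rintro ⟨h, h2⟩; exact ⟨h, by omega⟩
  refine ⟨claim1, claim2, claim3, ?_⟩
  rw [hsetT]
  by_cases hT : {s | 1 ≤ s ∧ ν s = lam}.Nonempty
  · have hmem := Nat.sInf_mem hT
    set m0 := sInf {s | 1 ≤ s ∧ ν s = lam} with hm0
    obtain ⟨h1, h2⟩ := hmem
    have hne1 : m0 ≠ 1 := by
      rintro h
      rw [h] at h2
      omega
    have hmm : ν (m0 - 1 + 1) = lam := by
      rw [show m0 - 1 + 1 = m0 by omega]
      exact h2
    apply le_antisymm
    · exact Nat.sInf_le (show m0 - 1 ∈ {s | 1 ≤ s ∧ ν (s + 1) = lam} from ⟨by omega, hmm⟩)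
    · apply le_csInf ⟨m0 - 1, show 1 ≤ m0 - 1 ∧ ν (m0 - 1 + 1) = lam from ⟨by omega, hmm⟩⟩
      rintro s ⟨hs1, hs2⟩
      have hle := Nat.sInf_le (show s + 1 ∈ {s | 1 ≤ s ∧ ν s = lam} from ⟨by omega, hs2⟩)
      rw [← hm0] at hle
      omega
  · have hT2 : {s | 1 ≤ s ∧ ν (s + 1) = lam} = ∅ := by
      ext s
      simp only [Set.mem_setOf_eq, Set.mem_empty_iff_false, iff_false]
      rintro ⟨h1, h2⟩
      exact hT ⟨s + 1, by omega, h2⟩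
    rw [hT2, Set.not_nonempty_iff_eq_empty.mp hT, Nat.sInf_empty]
end
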